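/- Let (W,S) be a Coxeter system in which, for some i ≥ 0, every element of Λ_i(S) is of the form A × K with A minimal nonspherical and K spherical. Then every ≡_i-equivalence class in Λ_i(S) is a singleton, and consequently Λ_j(S) = Λ_i(S) for all j ≥ i. -/

import Mathlib

open scoped Classical in
noncomputable section

variable {B W : Type*} [Group W] {M : CoxeterMatrix B}

/-- The special (standard parabolic) subgroup of `W` generated by the simple
reflections indexed by `T`. -/
def CoxeterSystem.specialSubgroup (cs : CoxeterSystem M W) (T : Set B) : Subgroup W :=
  Subgroup.closure (cs.simple '' T)

/-- `T` is spherical if the special subgroup `W_T` is finite. -/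
def CoxeterSystem.IsSpherical (cs : CoxeterSystem M W) (T : Set B) : Prop :=
  Finite (cs.specialSubgroup T)

/-- Two subsets of the generating set commute if each pair of simple reflections,
one from each, commutes in `W`. -/
def CoxeterSystem.SetsCommute (cs : CoxeterSystem M W) (A K : Set B) : Prop :=
  ∀ a ∈ A, ∀ k ∈ K, Commute (cs.simple a) (cs.simple k)

/-- `A` is minimal nonspherical: nonspherical, but every proper subset is spherical. -/
def CoxeterSystem.MinimalNonspherical (cs : CoxeterSystem M W) (A : Set B) : Prop :=
  ¬ cs.IsSpherical A ∧ ∀ C ⊂ A, cs.IsSpherical C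

/-- A subset `T` is irreducible if it admits no nontrivial partition into two
disjoint commuting subsets. -/
def CoxeterSystem.IsIrreducibleSubset (cs : CoxeterSystem M W) (T : Set B) : Prop :=
  ∀ A K : Set B, A ∪ K = T → Disjoint A K → cs.SetsCommute A K → A = ∅ ∨ K = ∅

/-- A subset `T` is affine-type if `W_T` is infinite and virtually abelian. -/
def CoxeterSystem.IsAffineSubset (cs : CoxeterSystem M W) (T : Set B) : Prop :=
  ¬ cs.IsSpherical T ∧ ∃ A : Subgroup W, A ≤ cs.specialSubgroup T ∧
    (∀ x ∈ A, ∀ y ∈ A, Commute x y) ∧ A.relIndex (cs.specialSubgroup T) ≠ 0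

/-- `T` is irreducible affine of rank at least `3`. -/
def CoxeterSystem.IsIrredAffineRankGE3 (cs : CoxeterSystem M W) (T : Set B) : Prop :=
  cs.IsIrreducibleSubset T ∧ cs.IsAffineSubset T ∧ 3 ≤ T.ncard

/-- The defining condition for wide subsets of the ambient subset `SS`:
`T = A × B` with `A`, `B` both nonspherical, or `A` irreducible affine of
rank `≥ 3` and `B` spherical (possibly empty). -/
def CoxeterSystem.IsWidePre (cs : CoxeterSystem M W) (SS T : Set B) : Prop :=
  T ⊆ SS ∧ ∃ A K : Set B, T = A ∪ K ∧ Disjoint A K ∧ cs.SetsCommute A K ∧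
    ((¬ cs.IsSpherical A ∧ ¬ cs.IsSpherical K) ∨
      (cs.IsIrredAffineRankGE3 A ∧ cs.IsSpherical K))

/-- The set `Ω(SS)` of wide subsets: the maximal elements of the collection above. -/
def CoxeterSystem.wide (cs : CoxeterSystem M W) (SS : Set B) : Set (Set B) :=
  {T | cs.IsWidePre SS T ∧ ∀ T', cs.IsWidePre SS T' → T ⊆ T' → T = T'}

/-- The defining condition for slab subsets: `T = A × K` with `A` minimal
nonspherical, `K` nonempty spherical commuting with `A`, and `T` contained in no
wide subset. -/
def CoxeterSystem.IsSlabPre (cs : CoxeterSystem M W) (SS T : Set B) : Prop :=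
  T ⊆ SS ∧ ∃ A K : Set B, T = A ∪ K ∧ Disjoint A K ∧ cs.SetsCommute A K ∧
    cs.MinimalNonspherical A ∧ K.Nonempty ∧ cs.IsSpherical K ∧
    ¬ ∃ T' ∈ cs.wide SS, T ⊆ T'

/-- The set `Ψ(SS)` of slab subsets: the maximal elements of the collection above. -/
def CoxeterSystem.slab (cs : CoxeterSystem M W) (SS : Set B) : Set (Set B) :=
  {T | cs.IsSlabPre SS T ∧ ∀ T', cs.IsSlabPre SS T' → T ⊆ T' → T = T'}

/-- One step of the relation generating `≡ᵢ`: both sets belong to the given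
collection and their intersection is nonspherical. -/
def CoxeterSystem.lambdaRel (cs : CoxeterSystem M W) (L : Set (Set B)) (T T' : Set B) : Prop :=
  T ∈ L ∧ T' ∈ L ∧ ¬ cs.IsSpherical (T ∩ T')

/-- The sets `Λᵢ(SS)` of the hypergraph index construction: `Λ₀ = Ω ∪ Ψ`, and
`Λᵢ₊₁` consists of the unions of the `≡ᵢ`-equivalence classes of `Λᵢ`. -/
def CoxeterSystem.lambdaSet (cs : CoxeterSystem M W) (SS : Set B) : ℕ → Set (Set B)
  | 0 => cs.wide SS ∪ cs.slab SS
  | (i+1) => {U | ∃ T ∈ cs.lambdaSet SS i,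
      U = ⋃₀ {T' | T' ∈ cs.lambdaSet SS i ∧
        Relation.EqvGen (cs.lambdaRel (cs.lambdaSet SS i)) T T'}}

/-- The hypergraph index of the subsystem on `SS`: the least `h` with
`SS ∈ Λ_h(SS)`, or `∞` if there is no such `h` or if `Ω(SS) = ∅`. -/
noncomputable def CoxeterSystem.hypergraphIndex (cs : CoxeterSystem M W) (SS : Set B) : ℕ∞ :=
  if cs.wide SS = ∅ then ⊤
  else sInf {n : ℕ∞ | ∃ h : ℕ, n = (h : ℕ∞) ∧ SS ∈ cs.lambdaSet SS h}

/-!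
STATEMENT 12: If, for some `i`, every element of `Λᵢ(S)` is of the form `A × K`
with `A` minimal nonspherical and `K` spherical, then every `≡ᵢ`-equivalence
class in `Λᵢ(S)` is a singleton, and `Λⱼ(S) = Λᵢ(S)` for all `j ≥ i`.
-/

/-! A set `T = A × K` with `A` minimal nonspherical and `K` spherical has `A` as its least
nonspherical subset: a nonspherical `U ⊆ T` missing part of `A` would be the commuting
product of the spherical sets `U ∩ A` and `U ∩ K`. Hence two such sets with nonspherical
intersection share the factor `A`. For two members `U = A × K`, `U' = A × K'` of `Λ₀` the
union `A × (K ∪ K')` is again a wide or slab candidate (wide as soon as one of them is wide,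
since `A` is then affine), so maximality gives `U = U'`. Every member of `Λᵢ` is a union of
members of `Λ₀`, and all those lying in `T` or `T'` have factor `A`, so they coincide and
`T = T'`. Classes of `≡ᵢ` are then singletons, so `Λᵢ₊₁ = Λᵢ` and the sequence is constant. -/

namespace CoxeterSystem

open Set

variable (cs : CoxeterSystem M W)

def IsSlabForm (A T : Set B) : Prop :=
  ∃ K, T = A ∪ K ∧ Disjoint A K ∧ cs.SetsCommute A K ∧ cs.MinimalNonspherical A ∧
    cs.IsSpherical K

variable {cs}

theorem IsSpherical.mono {C D : Set B} (hD : cs.IsSpherical D) (h : C ⊆ D) :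
    cs.IsSpherical C :=
  haveI : Finite (cs.specialSubgroup D) := hD
  Set.Finite.to_subtype <| (Set.toFinite (cs.specialSubgroup D : Set W)).subset <|
    Subgroup.closure_mono (image_mono h)

theorem isSpherical_empty : cs.IsSpherical (∅ : Set B) := by
  rw [IsSpherical, specialSubgroup, image_empty, Subgroup.closure_empty]
  infer_instance

theorem nonempty_of_not_isSpherical {A : Set B} (h : ¬ cs.IsSpherical A) : A.Nonempty :=
  nonempty_iff_ne_empty.mpr fun hA => h (hA ▸ isSpherical_empty)

theorem SetsCommute.specialSubgroup_le_centralizer {A K : Set B} (h : cs.SetsCommute A K) :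
    cs.specialSubgroup A ≤ Subgroup.centralizer (cs.specialSubgroup K : Set W) := by
  rw [specialSubgroup, specialSubgroup, Subgroup.centralizer_closure, Subgroup.closure_le]
  rintro _ ⟨a, ha, rfl⟩ _ ⟨k, hk, rfl⟩
  exact (h a ha k hk).symm.eq

theorem IsSpherical.union {A K : Set B} (hA : cs.IsSpherical A) (hK : cs.IsSpherical K)
    (hc : cs.SetsCommute A K) : cs.IsSpherical (A ∪ K) := by
  have : Finite (cs.specialSubgroup A) := hA
  have : Finite (cs.specialSubgroup K) := hK
  have hcomm : ∀ a k,
      Commute ((cs.specialSubgroup A).subtype a) ((cs.specialSubgroup K).subtype k) :=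
    fun a k => (hc.specialSubgroup_le_centralizer a.2 k k.2).symm
  have hsup : cs.specialSubgroup (A ∪ K) = (MonoidHom.noncommCoprod
      (cs.specialSubgroup A).subtype (cs.specialSubgroup K).subtype hcomm).range := by
    rw [MonoidHom.noncommCoprod_range, Subgroup.range_subtype, Subgroup.range_subtype,
      specialSubgroup, image_union, Subgroup.closure_union]
    rfl
  rw [IsSpherical, hsup]
  exact Set.finite_range _ |>.to_subtype

namespace IsSlabForm

variable {A A' T T' U : Set B}

theorem minimalNonspherical (h : cs.IsSlabForm A T) : cs.MinimalNonspherical A := by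
  obtain ⟨-, -, -, -, hA, -⟩ := h
  exact hA

theorem subset_of_not_isSpherical (h : cs.IsSlabForm A T) (hU : U ⊆ T)
    (hns : ¬ cs.IsSpherical U) : A ⊆ U := by
  obtain ⟨K, rfl, -, hc, hA, hK⟩ := h
  by_contra hAU
  have hUA : cs.IsSpherical (U ∩ A) := hA.2 _ <|
    ssubset_iff_subset_ne.mpr ⟨inter_subset_right, fun h => hAU (h ▸ inter_subset_left)⟩
  have hUK : cs.IsSpherical (U ∩ K) := hK.mono inter_subset_right
  refine hns ?_
  rw [← inter_eq_left.mpr hU, inter_union_distrib_left]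
  exact hUA.union hUK fun a ha k hk => hc a ha.2 k hk.2

theorem subset (h : cs.IsSlabForm A T) (hU : U ⊆ T) (hns : ¬ cs.IsSpherical U) :
    cs.IsSlabForm A U := by
  have hAU := h.subset_of_not_isSpherical hU hns
  obtain ⟨K, rfl, hd, hc, hA, hK⟩ := h
  refine ⟨U ∩ K, ?_, hd.mono_right inter_subset_right, fun a ha k hk => hc a ha k hk.2, hA,
    hK.mono inter_subset_right⟩
  conv_lhs => rw [← inter_eq_left.mpr hU, inter_union_distrib_left, inter_eq_right.mpr hAU]

theorem factor_eq (h : cs.IsSlabForm A T) (h' : cs.IsSlabForm A' T')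
    (hns : ¬ cs.IsSpherical (T ∩ T')) : A = A' := by
  have hA : A ⊆ T ∩ T' := h.subset_of_not_isSpherical inter_subset_left hns
  have hA' : A' ⊆ T ∩ T' := h'.subset_of_not_isSpherical inter_subset_right hns
  exact (h.subset_of_not_isSpherical (hA'.trans inter_subset_left)
    h'.minimalNonspherical.1).antisymm
    (h'.subset_of_not_isSpherical (hA.trans inter_subset_right) h.minimalNonspherical.1)

/-- `A` cannot lie in both factors of a decomposition of `T` into two nonspherical sets, and
an irreducible affine factor `A₂ ⊇ A` splits as `(A₂ ∩ A) × (A₂ ∩ K)`, forcing `A₂ = A`. -/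
theorem isIrredAffineRankGE3_of_mem_wide {SS : Set B} (h : cs.IsSlabForm A T)
    (hT : T ∈ cs.wide SS) : cs.IsIrredAffineRankGE3 A := by
  obtain ⟨⟨-, A₂, K₂, hT₂, hd₂, -, hcase⟩, -⟩ := hT
  obtain ⟨a, ha⟩ := nonempty_of_not_isSpherical h.minimalNonspherical.1
  rcases hcase with ⟨hA₂, hK₂⟩ | ⟨hA₂, -⟩
  · have h₁ := h.subset_of_not_isSpherical (hT₂ ▸ subset_union_left) hA₂
    have h₂ := h.subset_of_not_isSpherical (hT₂ ▸ subset_union_right) hK₂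
    exact absurd (h₂ ha) (disjoint_left.mp hd₂ (h₁ ha))
  · have hA₂T : A₂ ⊆ T := hT₂ ▸ subset_union_left
    have hAA₂ : A ⊆ A₂ := h.subset_of_not_isSpherical hA₂T hA₂.2.1.1
    obtain ⟨K, rfl, hd, hc, -, -⟩ := h
    have hsplit : A₂ ∩ A ∪ A₂ ∩ K = A₂ := by
      rw [← inter_union_distrib_left, inter_eq_left.mpr hA₂T]
    rcases hA₂.1 _ _ hsplit (hd.mono inter_subset_right inter_subset_right)
        (fun a ha k hk => hc a ha.2 k hk.2) with h | h
    · exact absurd h (nonempty_iff_ne_empty.mp ⟨a, hAA₂ ha, ha⟩)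
    · have hA₂A : A₂ ⊆ A := fun x hx =>
        (hA₂T hx).resolve_right fun hxK => h.subset ⟨hx, hxK⟩
      exact hA₂A.antisymm hAA₂ ▸ hA₂

end IsSlabForm

variable {SS T U V : Set B}

theorem exists_mem_wide_superset [Finite B] (hT : cs.IsWidePre SS T) :
    ∃ U ∈ cs.wide SS, T ⊆ U := by
  obtain ⟨U, hU, hmax⟩ := Set.Finite.exists_maximalFor id
    {V | cs.IsWidePre SS V ∧ T ⊆ V} (Set.toFinite _) ⟨T, hT, subset_rfl⟩
  exact ⟨U, ⟨hU.1, fun V hV hUV => hUV.antisymm (hmax ⟨hV, hU.2.trans hUV⟩ hUV)⟩, hU.2⟩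

theorem not_exists_mem_wide_superset_of_mem_slab (hU : U ∈ cs.slab SS) :
    ¬ ∃ V ∈ cs.wide SS, U ⊆ V := by
  obtain ⟨⟨-, -, -, -, -, -, -, -, -, hnot⟩, -⟩ := hU
  exact hnot

theorem IsSlabForm.mem_slab_of_mem_lambdaSet_zero {A : Set B} (h : cs.IsSlabForm A U)
    (hU : U ∈ cs.lambdaSet SS 0) (hA : ¬ cs.IsIrredAffineRankGE3 A) : U ∈ cs.slab SS :=
  hU.resolve_left fun hw => hA (h.isIrredAffineRankGE3_of_mem_wide hw)

theorem subset_of_mem_lambdaSet_zero (hU : U ∈ cs.lambdaSet SS 0) : U ⊆ SS := by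
  rcases hU with ⟨⟨hUS, -⟩, -⟩ | ⟨⟨hUS, -⟩, -⟩ <;> exact hUS

theorem not_isSpherical_of_mem_lambdaSet_zero (hU : U ∈ cs.lambdaSet SS 0) :
    ¬ cs.IsSpherical U := by
  rcases hU with ⟨⟨-, A, K, rfl, -, -, hcase⟩, -⟩ | ⟨⟨-, A, K, rfl, -, -, hA, -⟩, -⟩
  · have hA : ¬ cs.IsSpherical A := by
      rcases hcase with ⟨hA, -⟩ | ⟨hA, -⟩
      exacts [hA, hA.2.1.1]
    exact fun hU => hA (hU.mono subset_union_left)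
  · exact fun hU => hA.1 (hU.mono subset_union_left)

theorem eq_of_mem_lambdaSet_zero_of_isWidePre [Finite B] (hU : U ∈ cs.lambdaSet SS 0)
    (hUV : U ⊆ V) (hV : cs.IsWidePre SS V) : U = V := by
  rcases hU with hU | hU
  · exact hU.2 V hV hUV
  · obtain ⟨V', hV', hVV'⟩ := exists_mem_wide_superset hV
    exact absurd ⟨V', hV', hUV.trans hVV'⟩ (not_exists_mem_wide_superset_of_mem_slab hU)

/-- `U ∪ U' = A × (K ∪ K')` is a wide candidate if `K ∪ K'` is nonspherical or if one of
`U`, `U'` is wide (then `A` is affine); otherwise it is a slab candidate or equals `A`.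
Either way maximality of `U` and `U'` forces `U = U ∪ U' = U'`. -/
theorem eq_of_mem_lambdaSet_zero_of_isSlabForm [Finite B] {A U U' : Set B}
    (hU : U ∈ cs.lambdaSet SS 0) (hU' : U' ∈ cs.lambdaSet SS 0)
    (h : cs.IsSlabForm A U) (h' : cs.IsSlabForm A U') : U = U' := by
  have hA := h.minimalNonspherical
  have hUS := subset_of_mem_lambdaSet_zero hU
  have hU'S := subset_of_mem_lambdaSet_zero hU'
  obtain ⟨K, rfl, hd, hc, -, -⟩ := id h
  obtain ⟨K', rfl, hd', hc', -, -⟩ := id h'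
  have hV : A ∪ K ∪ (A ∪ K') = A ∪ (K ∪ K') := (union_union_distrib_left A K K').symm
  have hVd : Disjoint A (K ∪ K') := disjoint_union_right.mpr ⟨hd, hd'⟩
  have hVc : cs.SetsCommute A (K ∪ K') := fun a ha k hk => hk.elim (hc a ha k) (hc' a ha k)
  have hVS : A ∪ (K ∪ K') ⊆ SS := hV ▸ union_subset hUS hU'S
  by_cases hW : cs.IsWidePre SS (A ∪ (K ∪ K'))
  · rw [eq_of_mem_lambdaSet_zero_of_isWidePre hU (hV ▸ subset_union_left) hW,
      eq_of_mem_lambdaSet_zero_of_isWidePre hU' (hV ▸ subset_union_right) hW]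
  have hKK' : cs.IsSpherical (K ∪ K') := by
    by_contra hKK'
    exact hW ⟨hVS, A, K ∪ K', rfl, hVd, hVc, Or.inl ⟨hA.1, hKK'⟩⟩
  have hirr : ¬ cs.IsIrredAffineRankGE3 A := fun hirr =>
    hW ⟨hVS, A, K ∪ K', rfl, hVd, hVc, Or.inr ⟨hirr, hKK'⟩⟩
  have hUs := h.mem_slab_of_mem_lambdaSet_zero hU hirr
  have hU's := h'.mem_slab_of_mem_lambdaSet_zero hU' hirr
  rcases (K ∪ K').eq_empty_or_nonempty with hempty | hne
  · obtain ⟨rfl, rfl⟩ := union_empty_iff.mp hempty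
    rfl
  have hVslab : cs.IsSlabPre SS (A ∪ (K ∪ K')) :=
    ⟨hVS, A, K ∪ K', rfl, hVd, hVc, hA, hne, hKK', fun ⟨T, hT, hVT⟩ =>
      not_exists_mem_wide_superset_of_mem_slab hUs
        ⟨T, hT, (hV ▸ subset_union_left).trans hVT⟩⟩
  exact (hUs.2 _ hVslab (hV ▸ subset_union_left)).trans
    (hU's.2 _ hVslab (hV ▸ subset_union_right)).symm

theorem exists_mem_lambdaSet_zero_subset {i : ℕ} (hT : T ∈ cs.lambdaSet SS i) :
    ∃ U ∈ cs.lambdaSet SS 0, U ⊆ T := by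
  induction i generalizing T with
  | zero => exact ⟨T, hT, subset_rfl⟩
  | succ i ih =>
    obtain ⟨T₀, hT₀, rfl⟩ := hT
    obtain ⟨U, hU, hUT₀⟩ := ih hT₀
    exact ⟨U, hU, hUT₀.trans (subset_sUnion_of_mem ⟨hT₀, .refl T₀⟩)⟩

theorem exists_mem_lambdaSet_zero_mem_subset {i : ℕ} {x : B} (hT : T ∈ cs.lambdaSet SS i)
    (hx : x ∈ T) : ∃ U ∈ cs.lambdaSet SS 0, x ∈ U ∧ U ⊆ T := by
  induction i generalizing T with
  | zero => exact ⟨T, hT, hx, subset_rfl⟩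
  | succ i ih =>
    obtain ⟨T₀, -, rfl⟩ := hT
    obtain ⟨T', hT', hxT'⟩ := hx
    obtain ⟨U, hU, hxU, hUT'⟩ := ih hT'.1 hxT'
    exact ⟨U, hU, hxU, hUT'.trans (subset_sUnion_of_mem hT')⟩

theorem subset_of_isSlabForm_of_mem_lambdaSet [Finite B] {i : ℕ} {A T' : Set B}
    (hT : T ∈ cs.lambdaSet SS i) (hT' : T' ∈ cs.lambdaSet SS i)
    (h : cs.IsSlabForm A T) (h' : cs.IsSlabForm A T') : T ⊆ T' := by
  intro x hx
  obtain ⟨U, hU, hxU, hUT⟩ := exists_mem_lambdaSet_zero_mem_subset hT hx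
  obtain ⟨U', hU', hU'T'⟩ := exists_mem_lambdaSet_zero_subset hT'
  have hUU' : U = U' := eq_of_mem_lambdaSet_zero_of_isSlabForm hU hU'
    (h.subset hUT (not_isSpherical_of_mem_lambdaSet_zero hU))
    (h'.subset hU'T' (not_isSpherical_of_mem_lambdaSet_zero hU'))
  exact hU'T' (hUU' ▸ hxU)

theorem eq_of_mem_lambdaSet_of_not_isSpherical_inter [Finite B] {i : ℕ} {T' : Set B}
    (hform : ∀ T ∈ cs.lambdaSet SS i, ∃ A, cs.IsSlabForm A T)
    (hT : T ∈ cs.lambdaSet SS i) (hT' : T' ∈ cs.lambdaSet SS i)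
    (hns : ¬ cs.IsSpherical (T ∩ T')) : T = T' := by
  obtain ⟨A, h⟩ := hform T hT
  obtain ⟨A', h'⟩ := hform T' hT'
  obtain rfl := h.factor_eq h' hns
  exact (subset_of_isSlabForm_of_mem_lambdaSet hT hT' h h').antisymm
    (subset_of_isSlabForm_of_mem_lambdaSet hT' hT h' h)

theorem lambdaSet_succ_eq_self {i : ℕ}
    (h : ∀ T T', Relation.EqvGen (cs.lambdaRel (cs.lambdaSet SS i)) T T' → T = T') :
    cs.lambdaSet SS (i + 1) = cs.lambdaSet SS i := by
  have hclass : ∀ T ∈ cs.lambdaSet SS i, {T' | T' ∈ cs.lambdaSet SS i ∧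
      Relation.EqvGen (cs.lambdaRel (cs.lambdaSet SS i)) T T'} = {T} := fun T hT =>
    Subset.antisymm (fun T' hT' => (h T T' hT'.2).symm) (singleton_subset_iff.mpr ⟨hT, .refl T⟩)
  ext U
  rw [lambdaSet]
  constructor
  · rintro ⟨T, hT, rfl⟩
    rwa [hclass T hT, sUnion_singleton]
  · exact fun hU => ⟨U, hU, by rw [hclass U hU, sUnion_singleton]⟩

theorem lambdaSet_eq_of_succ_eq {i j : ℕ} (h : cs.lambdaSet SS (i + 1) = cs.lambdaSet SS i)
    (hij : i ≤ j) : cs.lambdaSet SS j = cs.lambdaSet SS i := by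
  induction j, hij using Nat.le_induction with
  | base => rfl
  | succ j _ ih => rw [lambdaSet, ih, ← lambdaSet, h]

end CoxeterSystem

theorem lambdaSet_stabilises_of_all_slab_form
    [Finite B] (cs : CoxeterSystem M W) (i : ℕ)
    (hform : ∀ T ∈ cs.lambdaSet Set.univ i, ∃ A K : Set B,
      T = A ∪ K ∧ Disjoint A K ∧ cs.SetsCommute A K ∧
      cs.MinimalNonspherical A ∧ cs.IsSpherical K) :
    (∀ T ∈ cs.lambdaSet Set.univ i, ∀ T' ∈ cs.lambdaSet Set.univ i,
      Relation.EqvGen (cs.lambdaRel (cs.lambdaSet Set.univ i)) T T' → T = T') ∧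
    ∀ j : ℕ, i ≤ j → cs.lambdaSet Set.univ j = cs.lambdaSet Set.univ i := by
  have hclasses : ∀ T T', Relation.EqvGen (cs.lambdaRel (cs.lambdaSet Set.univ i)) T T' →
      T = T' :=
    Relation.EqvGen.eqvGen_le fun _ _ hrel =>
      cs.eq_of_mem_lambdaSet_of_not_isSpherical_inter hform hrel.1 hrel.2.1 hrel.2.2
  exact ⟨fun T _ T' _ => hclasses T T', fun _ => cs.lambdaSet_eq_of_succ_eq
    (cs.lambdaSet_succ_eq_self hclasses)⟩
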